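/- arXiv:2510.02471 — 6 statements merged into one kernel-verified Lean document; each statement's English description precedes it below -/
import Mathlib

section
/- Stability of quantiles under deletion: let S ∈ ℝ^N be a vector and let S' ∈ ℝ^{N-τ} be any subvector of S obtained by deleting exactly τ entries (0 ≤ τ ≤ N-1). Then for any a ∈ [0,1], Quantile_{(1-a)·(N-τ)/N}(S) ≤ Quantile_{1-a}(S') ≤ Quantile_{1-a·(N-τ)/N}(S). -/
open MeasureTheory
open scoped ENNReal

/-- The `j`-th order statistic (1-indexed) of a finite real vector. -/
noncomputable def orderStat {m : ℕ} (v : Fin m → ℝ) (j : ℕ) : ℝ :=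
  ((List.ofFn v).mergeSort (fun x y => x ≤ y)).getD (j - 1) 0

/-- `Quantile b v` is the `⌈b·m⌉`-th order statistic of `v ∈ ℝ^m`, with the conventions
`Quantile b v = ⊤` if `b > 1` and `Quantile b v = ⊥` if `b ≤ 0`. -/
noncomputable def Quantile {m : ℕ} (b : ℝ) (v : Fin m → ℝ) : EReal :=
  if b > 1 then ⊤ else if b ≤ 0 then ⊥ else ((orderStat v ⌈b * m⌉.toNat : ℝ) : EReal)

/-- The deletion operator `Δ⁰_{k,τ}` of the paper (with `k` and `τ` counts of entries). -/
def delta0 {α : Type*} (m k τ : ℕ) (w : Fin m → α) : Fin (m - τ) → α :=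
  fun i =>
    if i.val < m - τ - k then w ⟨i.val, by have := i.isLt; omega⟩
    else w ⟨i.val + τ, by have := i.isLt; omega⟩

/-- The deletion operator `Δ¹_{k,τ}` of the paper. -/
def delta1 {α : Type*} (m k τ : ℕ) (w : Fin m → α) : Fin (m - τ) → α :=
  fun i =>
    if h : k + τ < m then
      if h2 : i.val < m - τ - k then w ⟨i.val + k + τ, by have := i.isLt; omega⟩
      else w ⟨i.val - (m - τ - k), by have := i.isLt; omega⟩
    else w ⟨(i.val + k + τ - m) % m, Nat.mod_lt _ (by have := i.isLt; omega)⟩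

/-- Total variation distance between the laws of two random elements `U, V` under `P`. -/
noncomputable def dTV {Ω γ : Type*} [MeasurableSpace Ω] [MeasurableSpace γ]
    (P : Measure Ω) (U V : Ω → γ) : ℝ :=
  ⨆ E : {E : Set γ // MeasurableSet E}, |(P (U ⁻¹' E.1)).toReal - (P (V ⁻¹' E.1)).toReal|

/-- The switch coefficient `Ψ_{k,τ}(W)` of a random vector `W` of length `m`. -/
noncomputable def switchCoef {Ω α : Type*} [MeasurableSpace Ω] [MeasurableSpace α]
    (P : Measure Ω) {m : ℕ} (W : Ω → Fin m → α) (k τ : ℕ) : ℝ :=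
  dTV P (fun ω => delta0 m k τ (W ω)) (fun ω => delta1 m k τ (W ω))

/-- The averaged switch coefficient `Ψ̄_τ(W) = (1/m) ∑_{k=1}^m Ψ_{k,τ}(W)`. -/
noncomputable def avgSwitchCoef {Ω α : Type*} [MeasurableSpace Ω] [MeasurableSpace α]
    (P : Measure Ω) {m : ℕ} (W : Ω → Fin m → α) (τ : ℕ) : ℝ :=
  (∑ k ∈ Finset.Icc 1 m, switchCoef P W k τ) / m

/-- Stationarity of a time series `Z = (Z_1,…,Z_{n+1})`. -/
def Stationary {Ω α : Type*} [MeasurableSpace Ω] [MeasurableSpace α]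
    (P : Measure Ω) {n : ℕ} (Z : Ω → Fin (n + 1) → α) : Prop :=
  ∀ (ℓ i : ℕ) (h : i + ℓ ≤ n + 1),
    Measure.map (fun ω (j : Fin ℓ) => Z ω ⟨i + j.val, by have := j.isLt; omega⟩) P =
      Measure.map (fun ω (j : Fin ℓ) => Z ω ⟨j.val, by have := j.isLt; omega⟩) P

/-- Exchangeability of a random vector. -/
def Exchangeable {Ω α : Type*} [MeasurableSpace Ω] [MeasurableSpace α]
    (P : Measure Ω) {n : ℕ} (Z : Ω → Fin (n + 1) → α) : Prop :=
  ∀ σ : Equiv.Perm (Fin (n + 1)),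
    Measure.map (fun ω => Z ω ∘ σ) P = Measure.map Z P

/-- The β-mixing coefficient with lag `τ` of `Z`, defined via an independent copy `Z'`. -/
noncomputable def betaMix {Ω α : Type*} [MeasurableSpace Ω] [MeasurableSpace α]
    (P : Measure Ω) (n : ℕ) (Z Z' : Ω → Fin (n + 1) → α) (τ : ℕ) : ℝ :=
  ⨆ k : Fin (n - τ),
    dTV P
      (fun ω (i : Fin (n + 1 - τ)) =>
        if i.val < k.val + 1 then Z ω ⟨i.val, by have := i.isLt; omega⟩
        else Z ω ⟨i.val + τ, by have := i.isLt; omega⟩)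
      (fun ω (i : Fin (n + 1 - τ)) =>
        if i.val < k.val + 1 then Z ω ⟨i.val, by have := i.isLt; omega⟩
        else Z' ω ⟨i.val + τ, by have := i.isLt; omega⟩)

/-!
Sorting turns the subvector `S ∘ φ` into a sublist of the sorted `S`. The entry in position `i` of
a sublist that is `τ` entries shorter comes from a position between `i` and `i + τ`, so by
monotonicity the `j`-th order statistic of `S ∘ φ` lies between the `j`-th and the `(j + τ)`-th
order statistics of `S`. With `j = ⌈(1 - a)(N - τ)⌉`, the two outer quantile levels `b` are exactly
those whose indices `⌈b N⌉` are `j` and `j + τ`.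
-/

theorem Fin.val_le_val_apply_of_strictMono {m n : ℕ} {f : Fin m → Fin n} (hf : StrictMono f)
    (i : Fin m) : (i : ℕ) ≤ f i := by
  have := Finset.card_le_card_of_injOn f (s := Finset.Iic i) (t := Finset.Iic (f i))
    (fun j hj => by simpa using hf.monotone (Finset.mem_Iic.1 hj)) hf.injective.injOn
  simpa using this

theorem Fin.val_apply_le_of_strictMono {m n : ℕ} {f : Fin m → Fin n} (hf : StrictMono f)
    (i : Fin m) : (f i : ℕ) ≤ i + (n - m) := by
  have := Finset.card_le_card_of_injOn f (s := Finset.Ici i) (t := Finset.Ici (f i))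
    (fun j hj => by simpa using hf.monotone (Finset.mem_Ici.1 hj)) hf.injective.injOn
  simp only [Fin.card_Ici] at this
  omega

namespace List

theorem SortedLE.getElem_le_getElem_of_sublist {α : Type*} [Preorder α] {l' l : List α}
    (hl : l.SortedLE) (h : l' <+ l) (i : ℕ) (hi : i < l'.length) :
    l[i]'(hi.trans_le h.length_le) ≤ l'[i] ∧
      l'[i] ≤ l[i + (l.length - l'.length)]'(by have := h.length_le; omega) := by
  obtain ⟨f, hf⟩ := sublist_iff_exists_fin_orderEmbedding_get_eq.1 h
  have hfi := hf ⟨i, hi⟩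
  simp only [get_eq_getElem] at hfi
  rw [hfi]
  exact ⟨hl.getElem_le_getElem_of_le (Fin.val_le_val_apply_of_strictMono f.strictMono ⟨i, hi⟩),
    hl.getElem_le_getElem_of_le (Fin.val_apply_le_of_strictMono f.strictMono ⟨i, hi⟩)⟩

theorem mergeSort_ofFn_comp_sublist {α : Type*} [LinearOrder α] {m n : ℕ} (v : Fin n → α)
    {φ : Fin m → Fin n} (hφ : StrictMono φ) :
    (ofFn (v ∘ φ)).mergeSort (· ≤ ·) <+ (ofFn v).mergeSort (· ≤ ·) := by
  have hφ_sub : ofFn φ <+ finRange n :=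
    sublist_of_subperm_of_sortedLE
      (subperm_of_subset (sortedLT_ofFn_iff.2 hφ).nodup fun x _ => mem_finRange x)
      (sortedLE_ofFn_iff.2 hφ.monotone) (ofFn_id n ▸ sortedLE_ofFn_iff.2 monotone_id)
  have hv_sub : ofFn (v ∘ φ) <+ ofFn v := by
    simpa only [map_ofFn, ← ofFn_eq_map] using hφ_sub.map v
  exact sublist_of_subperm_of_sortedLE
    ((mergeSort_perm _ _).subperm.trans (hv_sub.subperm.trans (mergeSort_perm _ _).symm.subperm))
    sortedLE_mergeSort sortedLE_mergeSort

end List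

theorem orderStat_le_orderStat_comp_le {N M : ℕ} (S : Fin N → ℝ) {φ : Fin M → Fin N}
    (hφ : StrictMono φ) {j : ℕ} (hj : 1 ≤ j) (hjM : j ≤ M) :
    orderStat S j ≤ orderStat (S ∘ φ) j ∧ orderStat (S ∘ φ) j ≤ orderStat S (j + (N - M)) := by
  have h := List.sortedLE_mergeSort.getElem_le_getElem_of_sublist
    (List.mergeSort_ofFn_comp_sublist S hφ) (j - 1) (by simp; omega)
  simp only [List.length_mergeSort, List.length_ofFn] at h
  have hMN : M ≤ N := by simpa using Fintype.card_le_of_injective φ hφ.injective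
  have hidx : j + (N - M) - 1 = j - 1 + (N - M) := by omega
  simp (disch := simp; omega) only [orderStat, hidx, List.getD_eq_getElem]
  exact h

theorem Quantile_eq_orderStat {m : ℕ} {b : ℝ} (v : Fin m → ℝ) (hb0 : 0 < b) (hb1 : b ≤ 1) :
    Quantile b v = orderStat v ⌈b * m⌉.toNat := by
  rw [Quantile, if_neg hb1.not_gt, if_neg hb0.not_ge]

theorem Quantile_of_nonpos {m : ℕ} {b : ℝ} (v : Fin m → ℝ) (hb : b ≤ 0) : Quantile b v = ⊥ := by
  rw [Quantile, if_neg (by linarith), if_pos hb]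

theorem one_le_toNat_ceil_mul_and_le {c : ℝ} {M : ℕ} (hc0 : 0 < c) (hc1 : c ≤ 1) (hM : 0 < M) :
    1 ≤ ⌈c * M⌉.toNat ∧ ⌈c * M⌉.toNat ≤ M := by
  have hM' : (0 : ℝ) < M := Nat.cast_pos.2 hM
  have hpos : 0 < ⌈c * M⌉ := Int.ceil_pos.2 (mul_pos hc0 hM')
  have hle : ⌈c * M⌉ ≤ M := Int.ceil_le.2 (by simpa using mul_le_of_le_one_left hM'.le hc1)
  omega

/-- Stability of quantiles under deletion of `τ` entries. -/
theorem stmt2 {N τ : ℕ} (hN : 1 ≤ N) (hτ : τ ≤ N - 1) (S : Fin N → ℝ)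
    (φ : Fin (N - τ) → Fin N) (hφ : StrictMono φ) (a : ℝ) (ha : 0 ≤ a) (ha1 : a ≤ 1) :
    Quantile ((1 - a) * (((N : ℝ) - τ) / N)) S ≤ Quantile (1 - a) (S ∘ φ) ∧
      Quantile (1 - a) (S ∘ φ) ≤ Quantile (1 - a * (((N : ℝ) - τ) / N)) S := by
  rcases ha1.eq_or_lt with rfl | ha1
  · rw [sub_self, zero_mul, Quantile_of_nonpos _ le_rfl, Quantile_of_nonpos _ le_rfl]
    exact ⟨le_rfl, bot_le⟩
  have hM : ((N - τ : ℕ) : ℝ) = N - τ := Nat.cast_sub (by omega)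
  have hN0 : (0 : ℝ) < N := by exact_mod_cast hN
  have hr0 : 0 < ((N : ℝ) - τ) / N := div_pos (by rw [← hM]; exact_mod_cast (by omega)) hN0
  have hr1 : ((N : ℝ) - τ) / N ≤ 1 := by rw [← hM, div_le_one hN0]; exact_mod_cast Nat.sub_le N τ
  set j := ⌈(1 - a) * (N - τ : ℕ)⌉.toNat
  obtain ⟨hj1, hjM⟩ :=
    one_le_toNat_ceil_mul_and_le (c := 1 - a) (M := N - τ) (by linarith) (by linarith) (by omega)
  have hleft : ⌈(1 - a) * (((N : ℝ) - τ) / N) * N⌉.toNat = j := by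
    rw [mul_assoc, div_mul_cancel₀ _ hN0.ne', ← hM]
  have hright : ⌈(1 - a * (((N : ℝ) - τ) / N)) * N⌉.toNat = j + τ := by
    have : (1 - a * (((N : ℝ) - τ) / N)) * N = (1 - a) * (N - τ : ℕ) + τ := by
      rw [hM]; field_simp; ring
    rw [this, Int.ceil_add_natCast]
    omega
  obtain ⟨hlow, hhigh⟩ := orderStat_le_orderStat_comp_le S hφ hj1 hjM
  rw [Nat.sub_sub_self (by omega)] at hhigh
  rw [Quantile_eq_orderStat _ (by positivity) (by nlinarith), hleft,
    Quantile_eq_orderStat _ (by linarith) (by linarith),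
    Quantile_eq_orderStat _ (by nlinarith) (by nlinarith), hright]
  exact ⟨EReal.coe_le_coe_iff.2 hlow, EReal.coe_le_coe_iff.2 hhigh⟩
end

section
/- Quantile comparison for the split construction: let S ∈ ℝ^N and let S' ∈ ℝ^{N-τ*} be the subvector of S obtained by deleting its first τ* entries (0 ≤ τ* ≤ N-1). Then for any α ∈ (0,1), Quantile_{1-α}(S) ≥ Quantile_{1-α'}(S') where α' = α·N/(N-τ*). -/
open MeasureTheory
open scoped ENNReal

/-!
Deleting `τ` entries of a vector moves its sorted values by at most `τ` places: the `j`-th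
smallest entry of the subvector is at most the `(j + τ)`-th smallest entry of the full vector,
because the sorted subvector is a sublist of the sorted vector. The level
`α' = αN / (N - τ)` satisfies `α' (N - τ) = α N`, so both quantiles leave the same number of
entries above them, and the rank `⌈(1 - α) N⌉` is exactly `⌈(1 - α') (N - τ)⌉ + τ`.
-/

theorem Fin.val_le_val_add_of_strictMono {n m : ℕ} {f : Fin n → Fin m} (hf : StrictMono f)
    (i : Fin n) : (f i : ℕ) ≤ i + (m - n) := by
  have hcard : (Finset.Ioi i).card ≤ (Finset.Ioi (f i)).card :=
    Finset.card_le_card_of_injOn f (fun j hj => by simpa using hf (by simpa using hj))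
      hf.injective.injOn
  simp only [Fin.card_Ioi] at hcard
  omega

theorem List.Sublist.getElem_le_getElem_add {α : Type*} [Preorder α] {l₁ l₂ : List α}
    (h : l₁.Sublist l₂) (hs : l₂.Pairwise (· ≤ ·)) (i : ℕ) (hi : i < l₁.length) :
    l₁[i] ≤ l₂[i + (l₂.length - l₁.length)]'(by have := h.length_le; omega) := by
  obtain ⟨f, hf⟩ := List.sublist_iff_exists_fin_orderEmbedding_get_eq.mp h
  have hfi := Fin.val_le_val_add_of_strictMono f.strictMono ⟨i, hi⟩
  calc l₁[i] = l₂[f ⟨i, hi⟩] := hf ⟨i, hi⟩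
    _ ≤ _ := List.sortedLE_iff_getElem_le_getElem_of_le.mp
        (List.sortedLE_iff_pairwise.mpr hs) hfi

theorem orderStat_le_orderStat_add_of_subperm {n m : ℕ} {v : Fin n → ℝ} {w : Fin m → ℝ}
    (h : (List.ofFn w).Subperm (List.ofFn v)) {j : ℕ} (hj : 1 ≤ j) (hjm : j ≤ m) :
    orderStat w j ≤ orderStat v (j + (n - m)) := by
  unfold orderStat
  set L₁ := (List.ofFn w).mergeSort (fun x y => x ≤ y)
  set L₂ := (List.ofFn v).mergeSort (fun x y => x ≤ y)
  have hs₂ : L₂.Pairwise (· ≤ ·) := List.pairwise_mergeSort' _ _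
  have hsub : L₁.Sublist L₂ := by
    refine List.sublist_of_subperm_of_pairwise ?_ (List.pairwise_mergeSort' _ _) hs₂
    exact (List.mergeSort_perm _ _).subperm.trans (h.trans (List.mergeSort_perm _ _).symm.subperm)
  have hlen₁ : L₁.length = m := by simp [L₁]
  have hlen₂ : L₂.length = n := by simp [L₂]
  have hmn := hsub.length_le
  have hidx : j + (n - m) - 1 = j - 1 + (L₂.length - L₁.length) := by omega
  rw [List.getD_eq_getElem _ _ (by omega), List.getD_eq_getElem _ _ (by omega)]
  simp only [hidx]
  exact hsub.getElem_le_getElem_add hs₂ (j - 1) (by omega)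

theorem quantile_le_quantile_of_subperm {n m : ℕ} {v : Fin n → ℝ} {w : Fin m → ℝ}
    (h : (List.ofFn w).Subperm (List.ofFn v)) (hm : 0 < m) {b b' : ℝ} (hb' : b' ≤ 1)
    (hbb' : (1 - b') * m = (1 - b) * n) :
    Quantile b' w ≤ Quantile b v := by
  have hmn : m ≤ n := by simpa using h.length_le
  have hmn' : (m : ℝ) ≤ n := by exact_mod_cast hmn
  have hm' : (0 : ℝ) < m := by exact_mod_cast hm
  unfold Quantile
  rw [if_neg hb'.not_gt]
  by_cases hb'₀ : b' ≤ 0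
  · rw [if_pos hb'₀]
    exact bot_le
  have hb'm : 0 < b' * m := mul_pos (not_le.mp hb'₀) hm'
  have hshift : b * n = b' * m + (n - m : ℕ) := by push_cast [hmn]; linarith
  have hb₁ : ¬b > 1 := by nlinarith
  have hb₀ : ¬b ≤ 0 := by nlinarith
  have hceil : ⌈b * n⌉.toNat = ⌈b' * m⌉.toNat + (n - m) := by
    rw [Int.ceil_toNat, Int.ceil_toNat, hshift, Nat.ceil_add_natCast hb'm.le]
  rw [if_neg hb'₀, if_neg hb₁, if_neg hb₀, hceil, EReal.coe_le_coe_iff]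
  refine orderStat_le_orderStat_add_of_subperm h ?_ ?_
  · rw [Int.ceil_toNat]
    exact Nat.one_le_iff_ne_zero.mpr (Nat.ceil_pos.mpr hb'm).ne'
  · rw [Int.ceil_toNat, Nat.ceil_le]
    nlinarith

/-- Quantile comparison for the split construction: deleting the first `τ*` entries. -/
theorem stmt3 {N τs : ℕ} (hN : 1 ≤ N) (hτs : τs ≤ N - 1) (S : Fin N → ℝ)
    (α : ℝ) (hα : 0 < α) :
    Quantile (1 - α * (N : ℝ) / ((N : ℝ) - τs))
        (fun i : Fin (N - τs) => S ⟨i.val + τs, by have := i.isLt; omega⟩)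
      ≤ Quantile (1 - α) S := by
  have hpos : (0 : ℝ) < (N : ℝ) - τs := by
    rw [sub_pos, Nat.cast_lt]
    omega
  have hdrop : List.ofFn (fun i : Fin (N - τs) => S ⟨i.val + τs, by have := i.isLt; omega⟩) =
      (List.ofFn S).drop τs := by
    apply List.ext_getElem (by simp)
    intro i _ _
    simp [Nat.add_comm]
  refine quantile_le_quantile_of_subperm ?_ (by omega) ?_ ?_
  · rw [hdrop]
    exact (List.drop_sublist _ _).subperm
  · have : 0 ≤ α * N / ((N : ℝ) - τs) := by positivity
    linarith
  · rw [Nat.cast_sub (by omega)]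
    field_simp
    ring
end

section
/- Equivalence of quantile thresholds with and without the test point: for scores S_1,...,S_n, S_{n+1} ∈ ℝ and α ∈ (0,1), the event S_{n+1} ≤ Quantile_{(1-α)(1+1/n)}(S_1,...,S_n) holds if and only if S_{n+1} ≤ Quantile_{1-α}(S_1,...,S_n,S_{n+1}). -/
open MeasureTheory
open scoped ENNReal

/-
A real `s` lies below the `j`-th order statistic iff fewer than `j` entries lie strictly below `s`.
For the test point `s = S (Fin.last n)` this count is the same for the first `n` scores as for the
full sample, since `s` is not strictly below itself. As `⌈(1 - α)(1 + 1/n) n⌉ = ⌈(1 - α)(n + 1)⌉`,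
both sides therefore compare `s` with order statistics of the same rank, except when
`(1 - α)(1 + 1/n) > 1`: then the left quantile is `⊤` and the right one is the maximum of the full
sample, which is at least `s`.
-/

namespace List

theorem SortedLE.getElem_lt_iff_lt_countP {α : Type*} [LinearOrder α] {l : List α}
    (hl : l.SortedLE) (s : α) {j : ℕ} (hj : j < l.length) :
    l[j] < s ↔ j < l.countP (· < s) := by
  constructor
  · intro hjs
    have hprefix : (l.take (j + 1)).countP (· < s) = j + 1 := by
      rw [countP_eq_length.mpr, length_take_of_le hj]
      intro x hx
      obtain ⟨i, hi, rfl⟩ := getElem_of_mem hx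
      simp only [getElem_take, length_take_of_le hj, decide_eq_true_eq] at hi ⊢
      exact (hl.monotone_get (a := ⟨i, by omega⟩) (b := ⟨j, hj⟩) (by simp; omega)).trans_lt hjs
    calc j < j + 1 := j.lt_succ_self
      _ = _ := hprefix.symm
      _ ≤ _ := (take_sublist _ _).countP_le
  · contrapose!
    intro hsj
    have hsuffix : (l.drop j).countP (· < s) = 0 := by
      rw [countP_eq_zero]
      intro x hx
      obtain ⟨i, hi, rfl⟩ := getElem_of_mem hx
      simp only [getElem_drop, decide_eq_true_eq, not_lt]
      exact hsj.trans (hl.monotone_get (a := ⟨j, hj⟩) (b := ⟨j + i, by simp at hi; omega⟩)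
        (by simp))
    calc l.countP (· < s) = (l.take j).countP (· < s) + (l.drop j).countP (· < s) := by
          rw [← countP_append, take_append_drop]
      _ ≤ j := by rw [hsuffix, add_zero]; exact countP_le_length.trans (length_take_le _ _)

theorem countP_ofFn_eq_countP_ofFn_init {α : Type*} {m : ℕ} (v : Fin (m + 1) → α)
    (p : α → Bool) (hp : p (v (Fin.last m)) = false) :
    (List.ofFn v).countP p = (List.ofFn fun i : Fin m => v i.castSucc).countP p := by
  rw [List.ofFn_succ', List.concat_eq_append, List.countP_append]
  simp [hp]

end List

theorem orderStat_lt_iff {m : ℕ} (v : Fin m → ℝ) {j : ℕ} (hj1 : 1 ≤ j) (hjm : j ≤ m) (s : ℝ) :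
    orderStat v j < s ↔ j ≤ (List.ofFn v).countP (· < s) := by
  have hlen : j - 1 < ((List.ofFn v).mergeSort (· ≤ ·)).length := by simp; omega
  rw [orderStat, List.getD_eq_getElem _ 0 hlen,
    List.sortedLE_mergeSort.getElem_lt_iff_lt_countP s hlen,
    (List.mergeSort_perm _ _).countP_eq]
  omega

theorem last_le_orderStat_iff_init {m : ℕ} (v : Fin (m + 1) → ℝ) {j : ℕ} (hj1 : 1 ≤ j)
    (hjm : j ≤ m) :
    v (Fin.last m) ≤ orderStat v j ↔
      v (Fin.last m) ≤ orderStat (fun i : Fin m => v i.castSucc) j := by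
  rw [← not_lt, ← not_lt, orderStat_lt_iff v hj1 (by omega), orderStat_lt_iff _ hj1 hjm,
    List.countP_ofFn_eq_countP_ofFn_init v _ (by simp)]

theorem last_le_orderStat_succ {m : ℕ} (v : Fin (m + 1) → ℝ) :
    v (Fin.last m) ≤ orderStat v (m + 1) := by
  rw [← not_lt, orderStat_lt_iff v (by omega) le_rfl,
    List.countP_ofFn_eq_countP_ofFn_init v _ (by simp), not_le, Nat.lt_succ_iff]
  exact List.countP_le_length.trans (List.length_ofFn).le

theorem quantile_of_one_lt {m : ℕ} {b : ℝ} (v : Fin m → ℝ) (hb : 1 < b) : Quantile b v = ⊤ :=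
  if_pos hb

theorem quantile_eq_orderStat {m : ℕ} {b : ℝ} (v : Fin m → ℝ) (hb0 : 0 < b) (hb1 : b ≤ 1) :
    Quantile b v = orderStat v ⌈b * m⌉₊ := by
  rw [Quantile, if_neg hb1.not_gt, if_neg hb0.not_ge, Int.ceil_toNat]

/-- Equivalence of quantile thresholds with and without the test point. -/
theorem stmt4 {n : ℕ} (hn : 1 ≤ n) (S : Fin (n + 1) → ℝ) (α : ℝ) (hα : 0 < α) (hα1 : α < 1) :
    ((S (Fin.last n) : EReal)
        ≤ Quantile ((1 - α) * (1 + 1 / (n : ℝ))) (fun i : Fin n => S i.castSucc))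
      ↔ ((S (Fin.last n) : EReal) ≤ Quantile (1 - α) S) := by
  have hn' : (0 : ℝ) < n := by exact_mod_cast hn
  have hα' : 0 < 1 - α := by linarith
  have hrank : (1 - α) * (1 + 1 / (n : ℝ)) * n = (1 - α) * ((n + 1 : ℕ) : ℝ) := by
    push_cast; field_simp
  have hj1 : 1 ≤ ⌈(1 - α) * ((n + 1 : ℕ) : ℝ)⌉₊ := Nat.ceil_pos.mpr (by positivity)
  rw [quantile_eq_orderStat S (by linarith) (by linarith)]
  rcases le_or_gt ((1 - α) * (1 + 1 / (n : ℝ))) 1 with hb | hb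
  · have hjn : ⌈(1 - α) * ((n + 1 : ℕ) : ℝ)⌉₊ ≤ n := by
      rw [Nat.ceil_le, ← hrank]
      exact mul_le_of_le_one_left hn'.le hb
    rw [quantile_eq_orderStat _ (by positivity) hb, hrank, EReal.coe_le_coe_iff,
      EReal.coe_le_coe_iff, last_le_orderStat_iff_init S hj1 hjn]
  · have hj : ⌈(1 - α) * ((n + 1 : ℕ) : ℝ)⌉₊ = n + 1 := by
      refine le_antisymm (Nat.ceil_le.mpr ?_) (Nat.succ_le_of_lt (Nat.lt_ceil.mpr ?_))
      · push_cast; nlinarith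
      · rw [← hrank]; exact lt_mul_of_one_lt_left hn' hb
    rw [quantile_of_one_lt _ hb, hj]
    simpa using last_le_orderStat_succ S
end

section
/- For a stationary time series Z = (Z_1,...,Z_{n+1}) with β-mixing coefficient β(τ), the switch coefficients satisfy Ψ_{k,τ}(Z) ≤ 2β(τ) for all 1 ≤ k ≤ n-τ, and Ψ_{k,τ}(Z) = 0 for n-τ < k ≤ n+1. -/
open MeasureTheory
open scoped ENNReal

section Stmt7Aux
set_option linter.unusedSectionVars false
variable {Ω γ γ' : Type*} [MeasurableSpace Ω] [MeasurableSpace γ] [MeasurableSpace γ']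
variable (P : Measure Ω) [IsProbabilityMeasure P]

lemma tv_term_le_one (U V : Ω → γ) (E : Set γ) :
    |(P (U ⁻¹' E)).toReal - (P (V ⁻¹' E)).toReal| ≤ 1 := by
  have h1 : (P (U ⁻¹' E)).toReal ≤ 1 := by
    simpa using ENNReal.toReal_mono (by simp) (prob_le_one (μ := P) (s := U ⁻¹' E))
  have h2 : (P (V ⁻¹' E)).toReal ≤ 1 := by
    simpa using ENNReal.toReal_mono (by simp) (prob_le_one (μ := P) (s := V ⁻¹' E))
  have h3 : (0:ℝ) ≤ (P (U ⁻¹' E)).toReal := ENNReal.toReal_nonneg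
  have h4 : (0:ℝ) ≤ (P (V ⁻¹' E)).toReal := ENNReal.toReal_nonneg
  rw [abs_sub_le_iff]; constructor <;> linarith

lemma tv_bdd (U V : Ω → γ) :
    BddAbove (Set.range fun E : {E : Set γ // MeasurableSet E} =>
      |(P (U ⁻¹' E.1)).toReal - (P (V ⁻¹' E.1)).toReal|) :=
  ⟨1, by rintro x ⟨E, rfl⟩; exact tv_term_le_one P U V E.1⟩

lemma dTV_triangle (U V W : Ω → γ) : dTV P U W ≤ dTV P U V + dTV P V W := by
  refine ciSup_le fun E => ?_
  refine (abs_sub_le _ ((P (V ⁻¹' E.1)).toReal) _).trans (add_le_add ?_ ?_)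
  · exact le_ciSup (tv_bdd P U V) E
  · exact le_ciSup (tv_bdd P V W) E

lemma dTV_comm (U V : Ω → γ) : dTV P U V = dTV P V U := by
  unfold dTV; congr 1; funext E; exact abs_sub_comm _ _

lemma dTV_congr_law {U U' V V' : Ω → γ} (hU : Measurable U) (hU' : Measurable U')
    (hV : Measurable V) (hV' : Measurable V')
    (h1 : Measure.map U P = Measure.map U' P) (h2 : Measure.map V P = Measure.map V' P) :
    dTV P U V = dTV P U' V' := by
  unfold dTV; congr 1; funext E
  have e1 : P (U ⁻¹' E.1) = P (U' ⁻¹' E.1) := by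
    rw [← Measure.map_apply hU E.2, ← Measure.map_apply hU' E.2, h1]
  have e2 : P (V ⁻¹' E.1) = P (V' ⁻¹' E.1) := by
    rw [← Measure.map_apply hV E.2, ← Measure.map_apply hV' E.2, h2]
  rw [e1, e2]

lemma dTV_self (U : Ω → γ) : dTV P U U = 0 := by
  unfold dTV
  have : (fun E : {E : Set γ // MeasurableSet E} =>
      |(P (U ⁻¹' E.1)).toReal - (P (U ⁻¹' E.1)).toReal|) = fun _ => (0:ℝ) := by
    funext E; simp
  rw [this, ciSup_const]

lemma dTV_eq_zero {U V : Ω → γ} (hU : Measurable U) (hV : Measurable V)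
    (h : Measure.map U P = Measure.map V P) : dTV P U V = 0 := by
  rw [dTV_congr_law P hU hV hV hV h rfl]; exact dTV_self P V

lemma dTV_comp_equiv (e : γ ≃ᵐ γ') (U V : Ω → γ) :
    dTV P (fun ω => e (U ω)) (fun ω => e (V ω)) = dTV P U V := by
  apply le_antisymm
  · refine ciSup_le fun E => ?_
    have h1 : ((fun ω => e (U ω)) ⁻¹' E.1) = U ⁻¹' (e ⁻¹' E.1) := rfl
    have h2 : ((fun ω => e (V ω)) ⁻¹' E.1) = V ⁻¹' (e ⁻¹' E.1) := rfl
    rw [h1, h2]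
    exact le_ciSup (tv_bdd P U V) ⟨e ⁻¹' E.1, e.measurable E.2⟩
  · refine ciSup_le fun E => ?_
    have h1 : U ⁻¹' E.1 = (fun ω => e (U ω)) ⁻¹' (e.symm ⁻¹' E.1) := by ext ω; simp
    have h2 : V ⁻¹' E.1 = (fun ω => e (V ω)) ⁻¹' (e.symm ⁻¹' E.1) := by ext ω; simp
    rw [h1, h2]
    exact le_ciSup (tv_bdd P _ _) ⟨e.symm ⁻¹' E.1, e.symm.measurable E.2⟩

end Stmt7Aux

/-- Rotation permutation of `Fin L` sending `j < k` to `j + (L - k)` and `j ≥ k` to `j - k`. -/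
def rotPerm (L k : ℕ) (hk : k ≤ L) : Equiv.Perm (Fin L) where
  toFun j := if _ : j.val < k then ⟨j.val + (L - k), by omega⟩
             else ⟨j.val - k, by have := j.isLt; omega⟩
  invFun j := if _ : j.val < L - k then ⟨j.val + k, by omega⟩
             else ⟨j.val - (L - k), by have := j.isLt; omega⟩
  left_inv j := by
    have := j.isLt
    apply Fin.ext
    by_cases h : j.val < k <;> simp only [h, dite_true, dite_false] <;> split <;> simp_all <;> omega
  right_inv j := by
    have := j.isLt
    apply Fin.ext
    by_cases h : j.val < L - k <;> simp only [h, dite_true, dite_false] <;> split <;> simp_all <;> omega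

/-- Precomposition with a permutation as a measurable equivalence. -/
def precompME {ι α : Type*} [MeasurableSpace α] (σ : Equiv.Perm ι) : (ι → α) ≃ᵐ (ι → α) where
  toFun f := f ∘ σ
  invFun f := f ∘ σ.symm
  left_inv f := by funext i; simp
  right_inv f := by funext i; simp
  measurable_toFun := measurable_pi_lambda _ fun i => measurable_pi_apply _
  measurable_invFun := measurable_pi_lambda _ fun i => measurable_pi_apply _

/-- Gluing function for a head of length `r` and tail of length `L - r`. -/
def glueC {α : Type*} (L r : ℕ) (p : (Fin r → α) × (Fin (L - r) → α)) : Fin L → α :=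
  fun i => if h : i.val < r then p.1 ⟨i.val, h⟩
           else p.2 ⟨i.val - r, by have := i.isLt; omega⟩

lemma measurable_glueC {α : Type*} [MeasurableSpace α] (L r : ℕ) :
    Measurable (glueC (α := α) L r) := by
  apply measurable_pi_lambda
  intro i
  unfold glueC
  split
  · exact (measurable_pi_apply _).comp measurable_fst
  · exact (measurable_pi_apply _).comp measurable_snd

lemma map_glue_of_indep {Ω α : Type*} [MeasurableSpace Ω] [MeasurableSpace α]
    {P : Measure Ω} [IsProbabilityMeasure P] {m L r : ℕ} {W W' : Ω → Fin m → α}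
    (hW : Measurable W) (hW' : Measurable W')
    (hind : ProbabilityTheory.IndepFun W W' P)
    (a : Fin r → Fin m) (b : Fin (L - r) → Fin m) :
    Measure.map (fun ω => glueC L r (fun j => W ω (a j), fun j => W' ω (b j))) P
      = Measure.map (glueC (α := α) L r)
          ((Measure.map (fun ω (j : Fin r) => W ω (a j)) P).prod
            (Measure.map (fun ω (j : Fin (L - r)) => W' ω (b j)) P)) := by
  set U : Ω → Fin r → α := fun ω j => W ω (a j) with hUdef
  set V : Ω → Fin (L - r) → α := fun ω j => W' ω (b j) with hVdef
  have hselA : Measurable fun z : Fin m → α => fun j : Fin r => z (a j) :=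
    measurable_pi_lambda _ fun j => measurable_pi_apply _
  have hselB : Measurable fun z : Fin m → α => fun j : Fin (L - r) => z (b j) :=
    measurable_pi_lambda _ fun j => measurable_pi_apply _
  have hU : Measurable U := hselA.comp hW
  have hV : Measurable V := hselB.comp hW'
  have hUV : ProbabilityTheory.IndepFun U V P := hind.comp hselA hselB
  have hjoint : Measure.map (fun ω => (U ω, V ω)) P = (Measure.map U P).prod (Measure.map V P) :=
    (ProbabilityTheory.indepFun_iff_map_prod_eq_prod_map_map hU.aemeasurable hV.aemeasurable).mp hUV
  calc Measure.map (fun ω => glueC L r (U ω, V ω)) P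
      = Measure.map (glueC (α := α) L r) (Measure.map (fun ω => (U ω, V ω)) P) := by
        rw [Measure.map_map (measurable_glueC L r) (hU.prodMk hV)]; rfl
    _ = _ := by rw [hjoint]


set_option maxHeartbeats 1000000 in
/-- Proposition 1: for a stationary time series with β-mixing coefficients `β(τ)`,
`Ψ_{k,τ}(Z) ≤ 2β(τ)` for `1 ≤ k ≤ n - τ`, and `Ψ_{k,τ}(Z) = 0` for `n - τ < k ≤ n + 1`. -/
theorem stmt7 {Ω α : Type*} [MeasurableSpace Ω] [MeasurableSpace α]
    (P : Measure Ω) [IsProbabilityMeasure P] {n : ℕ}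
    (Z Z' : Ω → Fin (n + 1) → α) (hZ : Measurable Z) (hZ' : Measurable Z')
    (hst : Stationary P Z) (hcopy : Measure.map Z' P = Measure.map Z P)
    (hindep : ProbabilityTheory.IndepFun Z Z' P) (τ : ℕ) (hτ : τ ≤ n) :
    (∀ k, 1 ≤ k → k ≤ n - τ → switchCoef P Z k τ ≤ 2 * betaMix P n Z Z' τ) ∧
      (∀ k, n - τ < k → k ≤ n + 1 → switchCoef P Z k τ = 0) := by
  have hmeasSel : ∀ {L : ℕ} (u : Fin L → Fin (n+1)) (W : Ω → Fin (n+1) → α),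
      Measurable W → Measurable (fun ω (j : Fin L) => W ω (u j)) :=
    fun u W hW => measurable_pi_lambda _ fun j => (measurable_pi_apply (u j)).comp hW
  have hmeasIf : ∀ {L : ℕ} (c : ℕ) (u v : Fin L → Fin (n+1)) (W W' : Ω → Fin (n+1) → α),
      Measurable W → Measurable W' →
      Measurable (fun ω (i : Fin L) => if i.val < c then W ω (u i) else W' ω (v i)) := by
    intro L c u v W W' hW hW'
    apply measurable_pi_lambda
    intro i
    by_cases h : i.val < c
    · simp only [h, if_true]; exact (measurable_pi_apply (u i)).comp hW
    · simp only [h, if_false]; exact (measurable_pi_apply (v i)).comp hW'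
  -- stationarity transfer helper
  have hstμ : ∀ (ℓ i : ℕ) (W : Ω → Fin (n+1) → α) (_ : Measurable W)
      (_ : Measure.map W P = Measure.map Z P) (hle : i + ℓ ≤ n + 1)
      (u : Fin ℓ → Fin (n+1)) (_ : ∀ j, (u j).val = i + j.val),
      Measure.map (fun ω (j : Fin ℓ) => W ω (u j)) P
        = Measure.map (fun ω (j : Fin ℓ) => Z ω ⟨j.val, by have := j.isLt; omega⟩) P := by
    intro ℓ i W hW hlaw hle u hu
    have hsel : Measurable fun z : Fin (n+1) → α => fun j : Fin ℓ => z (u j) :=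
      measurable_pi_lambda _ fun j => measurable_pi_apply _
    have h1 : Measure.map (fun ω (j : Fin ℓ) => W ω (u j)) P
        = Measure.map (fun z : Fin (n+1) → α => fun j : Fin ℓ => z (u j)) (Measure.map W P) :=
      (Measure.map_map hsel hW).symm
    rw [h1, hlaw, Measure.map_map hsel hZ]
    have h3 : (fun z : Fin (n+1) → α => fun j : Fin ℓ => z (u j)) ∘ Z
        = fun ω (j : Fin ℓ) => Z ω ⟨i + j.val, by have := j.isLt; omega⟩ := by
      funext ω j
      simp only [Function.comp]
      congr 1
      exact Fin.ext (hu j)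
    rw [h3]
    exact hst ℓ i hle
  constructor
  · -- main bound
    intro k hk1 hk2
    have hτn : τ < n := by omega
    have hβ : ∀ j : Fin (n - τ),
        dTV P
          (fun ω (i : Fin (n + 1 - τ)) =>
            if i.val < j.val + 1 then Z ω ⟨i.val, by have := i.isLt; omega⟩
            else Z ω ⟨i.val + τ, by have := i.isLt; omega⟩)
          (fun ω (i : Fin (n + 1 - τ)) =>
            if i.val < j.val + 1 then Z ω ⟨i.val, by have := i.isLt; omega⟩
            else Z' ω ⟨i.val + τ, by have := i.isLt; omega⟩) ≤ betaMix P n Z Z' τ := by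
      intro j
      unfold betaMix
      refine le_ciSup (f := fun k : Fin (n - τ) =>
        dTV P
          (fun ω (i : Fin (n + 1 - τ)) =>
            if i.val < k.val + 1 then Z ω ⟨i.val, by have := i.isLt; omega⟩
            else Z ω ⟨i.val + τ, by have := i.isLt; omega⟩)
          (fun ω (i : Fin (n + 1 - τ)) =>
            if i.val < k.val + 1 then Z ω ⟨i.val, by have := i.isLt; omega⟩
            else Z' ω ⟨i.val + τ, by have := i.isLt; omega⟩))
        (Set.Finite.bddAbove (Set.finite_range _)) j
    set X : Ω → Fin (n + 1 - τ) → α := fun ω i =>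
      if i.val < n - τ - k + 1 then Z ω ⟨i.val, by have := i.isLt; omega⟩
      else Z' ω ⟨i.val + τ, by have := i.isLt; omega⟩ with hXdef
    set G1 : Ω → Fin (n + 1 - τ) → α := fun ω i =>
      if i.val < n - τ - k + 1 then Z ω ⟨i.val, by have := i.isLt; omega⟩
      else Z ω ⟨i.val + τ, by have := i.isLt; omega⟩ with hG1def
    set Gf : Ω → Fin (n + 1 - τ) → α := fun ω i =>
      if i.val < k - 1 + 1 then Z ω ⟨i.val, by have := i.isLt; omega⟩
      else Z ω ⟨i.val + τ, by have := i.isLt; omega⟩ with hGfdef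
    set Hf : Ω → Fin (n + 1 - τ) → α := fun ω i =>
      if i.val < k - 1 + 1 then Z ω ⟨i.val, by have := i.isLt; omega⟩
      else Z' ω ⟨i.val + τ, by have := i.isLt; omega⟩ with hHfdef
    have hD0 : (fun ω => delta0 (n+1) k τ (Z ω)) = G1 := by
      funext ω i
      simp only [delta0, hG1def]
      by_cases hc : i.val < n + 1 - τ - k
      · rw [if_pos hc, if_pos (show i.val < n - τ - k + 1 by omega)]
      · rw [if_neg hc, if_neg (show ¬ i.val < n - τ - k + 1 by omega)]
    have hkL : k ≤ n + 1 - τ := by omega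
    set σ := rotPerm (n + 1 - τ) k hkL with hσdef
    set e := precompME (α := α) σ with hedef
    set X2 : Ω → Fin (n + 1 - τ) → α := fun ω =>
      glueC (n + 1 - τ) k
        (fun j : Fin k => Z' ω ⟨j.val + (n + 1 - k), by have := j.isLt; omega⟩,
         fun j : Fin (n + 1 - τ - k) => Z ω ⟨j.val, by have := j.isLt; omega⟩) with hX2def
    have heX : (fun ω => e (X ω)) = X2 := by
      funext ω j
      have hj := j.isLt
      show X ω (σ j) = X2 ω j
      by_cases h : j.val < k
      · have hσj : σ j = ⟨j.val + (n + 1 - τ - k), by omega⟩ := by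
          apply Fin.ext; simp [hσdef, rotPerm, h]
        rw [hσj]
        simp only [hXdef, hX2def, glueC]
        rw [if_neg (show ¬ (j.val + (n + 1 - τ - k) < n - τ - k + 1) by omega), dif_pos h]
        congr 1
        exact Fin.ext (by simp; omega)
      · have hσj : σ j = ⟨j.val - k, by omega⟩ := by
          apply Fin.ext; simp [hσdef, rotPerm, h]
        rw [hσj]
        simp only [hXdef, hX2def, glueC]
        rw [if_pos (show j.val - k < n - τ - k + 1 by omega), dif_neg h]
    have heD1 : (fun ω => e (delta1 (n+1) k τ (Z ω))) = Gf := by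
      funext ω j
      have hj := j.isLt
      have hklt : k + τ < n + 1 := by omega
      show delta1 (n+1) k τ (Z ω) (σ j) = Gf ω j
      by_cases h : j.val < k
      · have hσj : σ j = ⟨j.val + (n + 1 - τ - k), by omega⟩ := by
          apply Fin.ext; simp [hσdef, rotPerm, h]
        rw [hσj]
        simp only [delta1, hGfdef]
        rw [dif_pos hklt,
            dif_neg (show ¬ (j.val + (n + 1 - τ - k) < n + 1 - τ - k) by omega),
            if_pos (show j.val < k - 1 + 1 by omega)]
        congr 1
        exact Fin.ext (by simp)
      · have hσj : σ j = ⟨j.val - k, by omega⟩ := by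
          apply Fin.ext; simp [hσdef, rotPerm, h]
        rw [hσj]
        simp only [delta1, hGfdef]
        rw [dif_pos hklt,
            dif_pos (show j.val - k < n + 1 - τ - k by omega),
            if_neg (show ¬ (j.val < k - 1 + 1) by omega)]
        congr 1
        exact Fin.ext (by simp; omega)
    have hHfglue : Hf = fun ω =>
        glueC (n + 1 - τ) k
          (fun j : Fin k => Z ω ⟨j.val, by have := j.isLt; omega⟩,
           fun j : Fin (n + 1 - τ - k) => Z' ω ⟨j.val + (k + τ), by have := j.isLt; omega⟩) := by
      funext ω j
      have hj := j.isLt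
      simp only [hHfdef, glueC]
      by_cases h : j.val < k
      · rw [if_pos (show j.val < k - 1 + 1 by omega), dif_pos h]
      · rw [if_neg (show ¬ j.val < k - 1 + 1 by omega), dif_neg h]
        congr 1
        exact Fin.ext (by simp; omega)
    have hlawX2Hf : Measure.map X2 P = Measure.map Hf P := by
      rw [hX2def, hHfglue]
      rw [map_glue_of_indep hZ' hZ hindep.symm
        (fun j : Fin k => ⟨j.val + (n + 1 - k), by have := j.isLt; omega⟩)
        (fun j : Fin (n + 1 - τ - k) => ⟨j.val, by have := j.isLt; omega⟩)]
      rw [map_glue_of_indep hZ hZ' hindep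
        (fun j : Fin k => ⟨j.val, by have := j.isLt; omega⟩)
        (fun j : Fin (n + 1 - τ - k) => ⟨j.val + (k + τ), by have := j.isLt; omega⟩)]
      have hA : Measure.map (fun ω (j : Fin k) =>
            Z' ω (⟨j.val + (n + 1 - k), by have := j.isLt; omega⟩ : Fin (n+1))) P
          = Measure.map (fun ω (j : Fin k) =>
            Z ω (⟨j.val, by have := j.isLt; omega⟩ : Fin (n+1))) P :=
        (hstμ k (n + 1 - k) Z' hZ' hcopy (by omega) _ (fun j => by simp; omega)).trans
          (hstμ k 0 Z hZ rfl (by omega) _ (fun j => by simp)).symm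
      have hB : Measure.map (fun ω (j : Fin (n + 1 - τ - k)) =>
            Z ω (⟨j.val, by have := j.isLt; omega⟩ : Fin (n+1))) P
          = Measure.map (fun ω (j : Fin (n + 1 - τ - k)) =>
            Z' ω (⟨j.val + (k + τ), by have := j.isLt; omega⟩ : Fin (n+1))) P :=
        (hstμ (n + 1 - τ - k) 0 Z hZ rfl (by omega) _ (fun j => by simp)).trans
          (hstμ (n + 1 - τ - k) (k + τ) Z' hZ' hcopy (by omega) _
            (fun j => by simp; omega)).symm
      rw [hA, hB]
    have hmX2 : Measurable X2 := by
      rw [hX2def]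
      exact (measurable_glueC _ _).comp
        ((hmeasSel _ Z' hZ').prodMk (hmeasSel _ Z hZ))
    have hmHf : Measurable Hf := hmeasIf _ _ _ Z Z' hZ hZ'
    have hmGf : Measurable Gf := hmeasIf _ _ _ Z Z hZ hZ
    have step2 : dTV P X (fun ω => delta1 (n+1) k τ (Z ω)) ≤ betaMix P n Z Z' τ := by
      have h0 : dTV P X (fun ω => delta1 (n+1) k τ (Z ω))
          = dTV P (fun ω => e (X ω)) (fun ω => e (delta1 (n+1) k τ (Z ω))) :=
        (dTV_comp_equiv P e X _).symm
      rw [h0, heX, heD1]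
      have h1 : dTV P X2 Gf = dTV P Hf Gf :=
        dTV_congr_law P hmX2 hmHf hmGf hmGf hlawX2Hf rfl
      rw [h1, dTV_comm]
      exact hβ ⟨k - 1, by omega⟩
    have step1 : dTV P G1 X ≤ betaMix P n Z Z' τ := hβ ⟨n - τ - k, by omega⟩
    calc switchCoef P Z k τ
        = dTV P G1 (fun ω => delta1 (n+1) k τ (Z ω)) := by rw [switchCoef, hD0]
      _ ≤ dTV P G1 X + dTV P X (fun ω => delta1 (n+1) k τ (Z ω)) := dTV_triangle P _ _ _
      _ ≤ betaMix P n Z Z' τ + betaMix P n Z Z' τ := add_le_add step1 step2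
      _ = 2 * betaMix P n Z Z' τ := by ring
  · -- vanishing part
    intro k hk1 hk2
    have hD0 : (fun ω => delta0 (n+1) k τ (Z ω))
        = fun ω (j : Fin (n + 1 - τ)) => Z ω ⟨j.val + τ, by have := j.isLt; omega⟩ := by
      funext ω j
      simp only [delta0]
      rw [if_neg (show ¬ j.val < n + 1 - τ - k by omega)]
    have hD1 : (fun ω => delta1 (n+1) k τ (Z ω))
        = fun ω (j : Fin (n + 1 - τ)) =>
            Z ω ⟨j.val + (k + τ - (n + 1)), by have := j.isLt; omega⟩ := by
      funext ω j
      have hj := j.isLt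
      simp only [delta1]
      rw [dif_neg (show ¬ k + τ < n + 1 by omega)]
      congr 1
      apply Fin.ext
      show (j.val + k + τ - (n + 1)) % (n + 1) = j.val + (k + τ - (n + 1))
      have hlt : j.val + k + τ - (n + 1) < n + 1 := by omega
      rw [Nat.mod_eq_of_lt hlt]
      omega
    rw [switchCoef, hD0, hD1]
    apply dTV_eq_zero P (hmeasSel _ Z hZ) (hmeasSel _ Z hZ)
    exact (hstμ (n + 1 - τ) τ Z hZ rfl (by omega) _ (fun j => by simp; omega)).trans
      (hstμ (n + 1 - τ) (k + τ - (n + 1)) Z hZ rfl (by omega) _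
        (fun j => by simp; omega)).symm
end

section
/- Switch coefficients of scores with memory L: let s : Z^{L+1} → ℝ be a fixed score function, and for a time series Z ∈ Z^{n+1} define S = (S_{L+1},...,S_{n+1}) with S_i = s(Z_i; Z_{i-1},...,Z_{i-L}). Then for all k ∈ [n-L+1] and τ ∈ {L,...,n-L}, Ψ_{k,τ}(S) ≤ Ψ_{k+L, τ-L}(Z), and consequently Ψ̄_τ(S) ≤ ((n+1)/(n-L+1))·Ψ̄_{τ-L}(Z). -/
open MeasureTheory
open scoped ENNReal

/-!
Each score `S_j` is a fixed measurable function of the window `Z_j, …, Z_{j+L}`, and both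
deletion operators merely reindex coordinates. Hence `Δ^b_{k,τ}(S)` is one measurable map, the
same for `b = 0, 1`, applied to `Δ^b_{k+L,τ-L}(Z)`: deleting `L` fewer data points keeps exactly
the coordinates still needed by the windows next to the gap. Data processing for total variation
gives `Ψ_{k,τ}(S) ≤ Ψ_{k+L,τ-L}(Z)`; summing over `k` and comparing the normalisations
`n - L + 1` and `n + 1` gives the averaged bound.
-/

section TotalVariation

variable {Ω γ δ : Type*} [MeasurableSpace Ω] [MeasurableSpace γ] [MeasurableSpace δ]

lemma dTV_nonneg (P : Measure Ω) (U V : Ω → γ) : 0 ≤ dTV P U V :=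
  Real.iSup_nonneg fun _ => abs_nonneg _

lemma bddAbove_range_abs_sub_measure (P : Measure Ω) [IsFiniteMeasure P] (U V : Ω → γ) :
    BddAbove (Set.range fun E : {E : Set γ // MeasurableSet E} =>
      |(P (U ⁻¹' E.1)).toReal - (P (V ⁻¹' E.1)).toReal|) := by
  refine ⟨P.real Set.univ, ?_⟩
  rintro _ ⟨E, rfl⟩
  exact abs_sub_le_of_nonneg_of_le measureReal_nonneg (measureReal_mono (Set.subset_univ _))
    measureReal_nonneg (measureReal_mono (Set.subset_univ _))

lemma dTV_comp_le (P : Measure Ω) [IsFiniteMeasure P] (U V : Ω → γ) {F : γ → δ}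
    (hF : Measurable F) : dTV P (fun ω => F (U ω)) (fun ω => F (V ω)) ≤ dTV P U V := by
  have : Nonempty {E : Set δ // MeasurableSet E} := ⟨⟨∅, MeasurableSet.empty⟩⟩
  exact ciSup_le fun E => le_ciSup (bddAbove_range_abs_sub_measure P U V) ⟨F ⁻¹' E.1, hF E.2⟩

end TotalVariation

lemma switchCoef_le_of_factor {Ω α β : Type*} [MeasurableSpace Ω] [MeasurableSpace α]
    [MeasurableSpace β] (P : Measure Ω) [IsFiniteMeasure P] {m m' k k' τ τ' : ℕ}
    (W : Ω → Fin m → β) (V : Ω → Fin m' → α) {F : (Fin (m' - τ') → α) → Fin (m - τ) → β}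
    (hF : Measurable F) (h0 : ∀ ω, delta0 m k τ (W ω) = F (delta0 m' k' τ' (V ω)))
    (h1 : ∀ ω, delta1 m k τ (W ω) = F (delta1 m' k' τ' (V ω))) :
    switchCoef P W k τ ≤ switchCoef P V k' τ' := by
  unfold switchCoef
  simp only [h0, h1]
  exact dTV_comp_le P _ _ hF

section Deletion

variable {α : Type*}

lemma delta0_apply (m k τ : ℕ) (w : Fin m → α) (i : Fin (m - τ)) :
    delta0 m k τ w i = w ⟨if i.val < m - τ - k then i.val else i.val + τ,
      by have := i.isLt; split_ifs <;> omega⟩ := by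
  unfold delta0
  split_ifs <;> rfl

lemma delta1_apply (m k τ : ℕ) (w : Fin m → α) (i : Fin (m - τ)) :
    delta1 m k τ w i = w ⟨(i.val + k + τ) % m, Nat.mod_lt _ (by have := i.isLt; omega)⟩ := by
  have hi := i.isLt
  unfold delta1
  split_ifs with h h2 <;> congr 1 <;> ext <;> simp only
  · rw [Nat.mod_eq_of_lt (by omega)]
  · rw [Nat.mod_eq_sub_mod (by omega), Nat.mod_eq_of_lt (by omega)]
    omega
  · rw [Nat.mod_eq_sub_mod (a := i.val + k + τ) (by omega)]

end Deletion

section MemoryScores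

variable {α : Type*}

/-- `S_{L+1+j} = s(Z_{L+1+j}; Z_{L+j}, …, Z_{1+j})`, `0`-indexed. -/
def memoryScores {n L : ℕ} (hL : L ≤ n) (s : (Fin (L + 1) → α) → ℝ) (z : Fin (n + 1) → α)
    (j : Fin (n - L + 1)) : ℝ :=
  s fun l : Fin (L + 1) => z ⟨L + j.val - l.val, by omega⟩

/-- Reads `Δ^b_{k,τ}(S)` off `Δ^b_{k+L,τ-L}(Z)` for both `b`. The `min` only keeps the index in
range for all parameters; it is inactive when `L ≤ τ ≤ n - L`. -/
def deletedScores (n L : ℕ) (s : (Fin (L + 1) → α) → ℝ) (k τ : ℕ)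
    (w : Fin (n + 1 - (τ - L)) → α) (i : Fin (n - L + 1 - τ)) : ℝ :=
  s fun l => w ⟨min ((if i.val < n - L + 1 - τ - k then i.val + L else i.val + 2 * L) - l.val)
    (n - (τ - L)), by have := i.isLt; omega⟩

variable {n L : ℕ} {hL : L ≤ n} {s : (Fin (L + 1) → α) → ℝ}

lemma measurable_deletedScores [MeasurableSpace α] (hs : Measurable s) (k τ : ℕ) :
    Measurable (deletedScores (α := α) n L s k τ) :=
  measurable_pi_lambda _ fun _ => hs.comp (measurable_pi_lambda _ fun _ => measurable_pi_apply _)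

variable {k τ : ℕ}

lemma delta0_memoryScores (hτL : L ≤ τ) (z : Fin (n + 1) → α) :
    delta0 (n - L + 1) k τ (memoryScores hL s z)
      = deletedScores n L s k τ (delta0 (n + 1) (k + L) (τ - L) z) := by
  funext i
  have hi := i.isLt
  simp only [delta0_apply, memoryScores, deletedScores]
  congr 1
  funext l
  have hl := l.isLt
  congr 1
  ext
  simp only
  split_ifs <;> omega

lemma delta1_memoryScores (hτL : L ≤ τ) (hτn : τ ≤ n - L) (hk : k ≤ n - L + 1)
    (z : Fin (n + 1) → α) :
    delta1 (n - L + 1) k τ (memoryScores hL s z)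
      = deletedScores n L s k τ (delta1 (n + 1) (k + L) (τ - L) z) := by
  funext i
  have hi := i.isLt
  simp only [delta1_apply, memoryScores, deletedScores]
  congr 1
  funext l
  have hl := l.isLt
  congr 1
  ext
  simp only
  by_cases hc : i.val < n - L + 1 - τ - k
  · rw [if_pos hc, min_eq_left (by omega), Nat.mod_eq_of_lt (by omega),
      Nat.mod_eq_of_lt (by omega)]
    omega
  · rw [if_neg hc, min_eq_left (by omega), Nat.mod_eq_sub_mod (by omega),
      Nat.mod_eq_of_lt (by omega), Nat.mod_eq_sub_mod (by omega), Nat.mod_eq_of_lt (by omega)]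
    omega

lemma switchCoef_memoryScores_le {Ω : Type*} [MeasurableSpace Ω] [MeasurableSpace α]
    (P : Measure Ω) [IsFiniteMeasure P] (Z : Ω → Fin (n + 1) → α) (hs : Measurable s)
    (hτL : L ≤ τ) (hτn : τ ≤ n - L) (hk : k ≤ n - L + 1) :
    switchCoef P (fun ω => memoryScores hL s (Z ω)) k τ ≤ switchCoef P Z (k + L) (τ - L) :=
  switchCoef_le_of_factor P _ Z (measurable_deletedScores hs k τ)
    (fun ω => delta0_memoryScores hτL (Z ω))
    (fun ω => delta1_memoryScores hτL hτn hk (Z ω))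

end MemoryScores

open Finset in
lemma sum_Icc_add_le_sum_Icc {f : ℕ → ℝ} (hf : ∀ k, 0 ≤ f k) {m L N : ℕ} (h : m + L ≤ N) :
    ∑ k ∈ Icc 1 m, f (k + L) ≤ ∑ k ∈ Icc 1 N, f k := by
  calc ∑ k ∈ Icc 1 m, f (k + L) = ∑ k ∈ Icc (1 + L) (m + L), f k := by
        rw [← map_add_right_Icc, sum_map]
        rfl
    _ ≤ ∑ k ∈ Icc 1 N, f k := sum_le_sum_of_subset_of_nonneg
        (fun x hx => by simp only [mem_Icc] at hx ⊢; omega) fun k _ _ => hf k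

/-- Proposition 2: switch coefficients of the score process with memory `L` are bounded
by switch coefficients of the data. -/
theorem stmt9 {Ω α : Type*} [MeasurableSpace Ω] [MeasurableSpace α]
    (P : Measure Ω) [IsProbabilityMeasure P] {n L : ℕ} (hL : L ≤ n)
    (Z : Ω → Fin (n + 1) → α)
    (s : (Fin (L + 1) → α) → ℝ) (hs : Measurable s) :
    (∀ k τ, 1 ≤ k → k ≤ n - L + 1 → L ≤ τ → τ ≤ n - L →
        switchCoef P (fun ω (j : Fin (n - L + 1)) =>
            s fun l : Fin (L + 1) => Z ω ⟨L + j.val - l.val, by have := j.isLt; omega⟩) k τ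
          ≤ switchCoef P Z (k + L) (τ - L)) ∧
      (∀ τ, L ≤ τ → τ ≤ n - L →
        avgSwitchCoef P (fun ω (j : Fin (n - L + 1)) =>
            s fun l : Fin (L + 1) => Z ω ⟨L + j.val - l.val, by have := j.isLt; omega⟩) τ
          ≤ (((n : ℝ) + 1) / ((n : ℝ) - L + 1)) * avgSwitchCoef P Z (τ - L)) := by
  have pointwise : ∀ k τ, k ≤ n - L + 1 → L ≤ τ → τ ≤ n - L →
      switchCoef P (fun ω => memoryScores hL s (Z ω)) k τ ≤ switchCoef P Z (k + L) (τ - L) :=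
    fun k τ hk hτL hτn => switchCoef_memoryScores_le P Z hs hτL hτn hk
  refine ⟨fun k τ _ hk hτL hτn => pointwise k τ hk hτL hτn, fun τ hτL hτn => ?_⟩
  have hsum : ∑ k ∈ Finset.Icc 1 (n - L + 1), switchCoef P (fun ω => memoryScores hL s (Z ω)) k τ
      ≤ ∑ k ∈ Finset.Icc 1 (n + 1), switchCoef P Z k (τ - L) :=
    (Finset.sum_le_sum fun k hk => pointwise k τ (Finset.mem_Icc.1 hk).2 hτL hτn).trans
      (sum_Icc_add_le_sum_Icc (f := fun k => switchCoef P Z k (τ - L))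
        (fun _ => dTV_nonneg P _ _) (by omega))
  have hlen : ((n - L + 1 : ℕ) : ℝ) = (n : ℝ) - L + 1 := by push_cast [hL]; ring
  have hpos : (0 : ℝ) < (n : ℝ) - L + 1 := by rw [← hlen]; positivity
  calc avgSwitchCoef P (fun ω => memoryScores hL s (Z ω)) τ
      ≤ (∑ k ∈ Finset.Icc 1 (n + 1), switchCoef P Z k (τ - L)) / ((n : ℝ) - L + 1) := by
        unfold avgSwitchCoef
        rw [hlen]
        exact div_le_div_of_nonneg_right hsum hpos.le
    _ = ((n + 1) / ((n : ℝ) - L + 1)) * avgSwitchCoef P Z (τ - L) := by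
        unfold avgSwitchCoef
        push_cast
        field_simp
end

section
/- One-step coverage comparison: let S = (S_{L+1},...,S_{n+1}) be a random vector of real scores, fix τ ∈ {0,...,n-L} and α ∈ (0,1). Then for every i ∈ {L+1,...,n+1}, P(S_{n+1} ≤ Quantile_{1-α}(S)) ≥ P(S_i ≤ Quantile_{1-α-τ/(n-L+1)}(S)) − Ψ_{i-L,τ}(S). -/
/-! Both events are rank conditions: `x ≤ Quantile b v` iff fewer than `⌈b m⌉` entries of `v`
lie below `x`. Deleting `τ` entries lowers such a count by at most `τ`, which is exactly what the
shift of the level by `τ / m` absorbs. So for the measurable set `E` of vectors whose last entry has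
fewer than `⌈(1 - α) m⌉ - τ` entries below it, the event for `S_{n+1}` contains `{Δ⁰(S) ∈ E}` and
the event for `S_i` is contained in `{Δ¹(S) ∈ E}`, since the last entries of `Δ⁰(S)` and `Δ¹(S)`
are `S_{n+1}` and `S_i`. These two events have probabilities differing by at most `Ψ_{i-L,τ}(S)`.
-/

open MeasureTheory
open scoped ENNReal

open Finset

theorem List.Pairwise.le_getElem_iff_countP_le {α : Type*} [LinearOrder α] {l : List α}
    (hl : l.Pairwise (· ≤ ·)) {j : ℕ} (hj : j < l.length) (x : α) :
    x ≤ l[j] ↔ l.countP (· < x) ≤ j := by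
  have hsplit : l = l.take j ++ l[j] :: l.drop (j + 1) := by
    rw [← List.drop_eq_getElem_cons, List.take_append_drop]
  have hlen : (l.take j).length = j := by simp [hj.le]
  rw [hsplit, List.pairwise_append, List.pairwise_cons] at hl
  obtain ⟨-, ⟨hjdrop, -⟩, htake⟩ := hl
  have hsum := congrArg (List.countP (· < x)) hsplit
  rw [List.countP_append] at hsum
  rw [hsum]
  constructor
  · intro hx
    have : (l[j] :: l.drop (j + 1)).countP (· < x) = 0 := by
      simp only [List.countP_eq_zero, List.mem_cons, decide_eq_true_eq, not_lt]
      rintro y (rfl | hy)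
      exacts [hx, hx.trans (hjdrop y hy)]
    have := (l.take j).countP_le_length (p := (· < x))
    omega
  · intro hle
    by_contra! hx
    have : (l.take j).countP (· < x) = j := by
      rw [List.countP_eq_length.2 fun y hy => ?_, hlen]
      exact decide_eq_true ((htake y hy l[j] List.mem_cons_self).trans_lt hx)
    rw [List.countP_cons_of_pos (by simpa using hx)] at hle
    omega

theorem List.countP_ofFn {α : Type*} {m : ℕ} (v : Fin m → α) (p : α → Prop) [DecidablePred p] :
    (List.ofFn v).countP (p ·) = #{i | p (v i)} := by
  rw [← Multiset.coe_countP, ← Fin.univ_val_map, Multiset.countP_map, card_def, filter_val]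

theorem le_orderStat_iff_card_lt {m : ℕ} (v : Fin m → ℝ) {j : ℕ} (hj : 1 ≤ j) (hjm : j ≤ m)
    (x : ℝ) : x ≤ orderStat v j ↔ #{i | v i < x} < j := by
  set l := (List.ofFn v).mergeSort (fun x y => x ≤ y)
  have hlen : l.length = m := by simp [l]
  have hj' : j - 1 < l.length := by omega
  rw [orderStat, List.getD_eq_getElem _ _ hj', List.Pairwise.le_getElem_iff_countP_le
    (List.pairwise_mergeSort' _ _) hj', (List.mergeSort_perm _ _).countP_eq, List.countP_ofFn]
  omega

theorem coe_le_quantile_iff {m : ℕ} (hm : 0 < m) {b : ℝ} (hb₀ : 0 < b) (hb₁ : b ≤ 1)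
    (v : Fin m → ℝ) (x : ℝ) : (x : EReal) ≤ Quantile b v ↔ #{i | v i < x} < ⌈b * m⌉.toNat := by
  have hbm₀ : 0 < b * m := by positivity
  have hbm₁ : b * m ≤ m := mul_le_of_le_one_left m.cast_nonneg hb₁
  have h1 : 1 ≤ ⌈b * m⌉.toNat := by
    have := Int.ceil_pos.2 hbm₀
    omega
  have h2 : ⌈b * m⌉.toNat ≤ m := by
    have := Int.ceil_le.2 (by exact_mod_cast hbm₁ : b * m ≤ (m : ℤ))
    omega
  rw [Quantile, if_neg (not_lt.2 hb₁), if_neg (not_le.2 hb₀), EReal.coe_le_coe_iff,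
    le_orderStat_iff_card_lt v h1 h2]

theorem quantile_of_nonpos {m : ℕ} {b : ℝ} (hb : b ≤ 0) (v : Fin m → ℝ) : Quantile b v = ⊥ := by
  rw [Quantile, if_neg (not_lt.2 (hb.trans zero_le_one)), if_pos hb]

theorem ceil_sub_div_mul_toNat {m : ℕ} (hm : 0 < m) (b : ℝ) (τ : ℕ) :
    ⌈(b - τ / m) * m⌉.toNat = ⌈b * m⌉.toNat - τ := by
  rw [sub_mul, div_mul_cancel₀ _ (by positivity), Int.ceil_sub_natCast]
  omega

open Function

theorem card_filter_comp_le_of_injective {α β : Type*} [Fintype α] [Fintype β] {ι : α → β}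
    (hι : Injective ι) (p : β → Prop) [DecidablePred p] : #{a | p (ι a)} ≤ #{b | p b} :=
  card_le_card_of_injOn ι (fun a ha => by simpa using ha) hι.injOn

theorem card_filter_le_comp_add_of_injective {α β : Type*} [Fintype α] [Fintype β]
    [DecidableEq β] {ι : α → β} (hι : Injective ι) (p : β → Prop) [DecidablePred p] :
    #{b | p b} ≤ #{a | p (ι a)} + (Fintype.card β - Fintype.card α) := by
  set e : α ↪ β := ⟨ι, hι⟩
  calc #{b | p b} ≤ #((univ.map e).filter p ∪ univ \ univ.map e) :=
        card_le_card fun b hb => by by_cases b ∈ univ.map e <;> simp_all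
    _ ≤ #((univ.map e).filter p) + #(univ \ univ.map e) := card_union_le _ _
    _ = #{a | p (ι a)} + (Fintype.card β - Fintype.card α) := by
        rw [filter_map, card_map, card_sdiff_of_subset (subset_univ _), card_map, card_univ,
          card_univ]
        rfl

section Deletion

variable {α : Type*}

theorem delta0_eq_comp (m k τ : ℕ) (w : Fin m → α) : delta0 m k τ w = w ∘ delta0 m k τ id := by
  funext i
  simp only [delta0, comp_apply, apply_ite w, id]

theorem delta1_eq_comp (m k τ : ℕ) (w : Fin m → α) : delta1 m k τ w = w ∘ delta1 m k τ id := by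
  funext i
  simp only [delta1, comp_apply, apply_dite w, id]

theorem delta0_id_injective (m k τ : ℕ) : Injective (delta0 m k τ id) := by
  intro i j hij
  simp only [delta0, id] at hij
  ext
  split_ifs at hij <;> simp only [Fin.mk.injEq] at hij <;> omega

theorem delta1_id_injective {m k : ℕ} (hk : k ≤ m) (τ : ℕ) : Injective (delta1 m k τ id) := by
  intro i j hij
  have := i.isLt
  have := j.isLt
  simp only [delta1, id] at hij
  ext
  split_ifs at hij <;> simp (disch := omega) only [Fin.mk.injEq, Nat.mod_eq_of_lt] at hij <;>
    omega

theorem delta0_apply_last {m k τ : ℕ} (hk : 1 ≤ k) (hτ : τ ≤ m) (w : Fin (m + 1) → α) :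
    delta0 (m + 1) k τ w ⟨m - τ, by omega⟩ = w (Fin.last m) := by
  simp only [delta0]
  rw [if_neg (by omega)]
  congr 1
  ext
  simp only [Fin.val_last]
  omega

theorem delta1_apply_last {m k τ : ℕ} (hk : 1 ≤ k) (hkm : k ≤ m + 1) (hτ : τ ≤ m)
    (w : Fin (m + 1) → α) :
    delta1 (m + 1) k τ w ⟨m - τ, by omega⟩ = w ⟨k - 1, by omega⟩ := by
  simp only [delta1]
  split_ifs
  · omega
  · congr 1
    ext
    simp
    omega
  · congr 1
    ext
    simp only
    rw [Nat.mod_eq_of_lt (by omega)]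
    omega

end Deletion

theorem measureReal_preimage_le_add_dTV {Ω γ : Type*} [MeasurableSpace Ω] [MeasurableSpace γ]
    (P : Measure Ω) [IsFiniteMeasure P] (U V : Ω → γ) {E : Set γ} (hE : MeasurableSet E) :
    P.real (V ⁻¹' E) ≤ P.real (U ⁻¹' E) + dTV P U V := by
  have hbdd : BddAbove (Set.range fun E : {E : Set γ // MeasurableSet E} =>
      |P.real (U ⁻¹' E.1) - P.real (V ⁻¹' E.1)|) := by
    refine ⟨P.real Set.univ, ?_⟩
    rintro _ ⟨E', rfl⟩
    exact abs_sub_le_of_nonneg_of_le measureReal_nonneg (measureReal_mono (Set.subset_univ _))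
      measureReal_nonneg (measureReal_mono (Set.subset_univ _))
  rw [← sub_le_iff_le_add']
  calc P.real (V ⁻¹' E) - P.real (U ⁻¹' E) ≤ |P.real (U ⁻¹' E) - P.real (V ⁻¹' E)| :=
        abs_sub_comm (P.real (U ⁻¹' E)) _ ▸ le_abs_self _
    _ ≤ dTV P U V := le_ciSup hbdd ⟨E, hE⟩

theorem measurable_card_filter_lt_apply {m : ℕ} (j₀ : Fin m) :
    Measurable fun w : Fin m → ℝ => #{j | w j < w j₀} := by
  simp_rw [card_filter]
  exact Finset.measurable_sum _ fun j _ => Measurable.ite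
    (measurableSet_lt (measurable_pi_apply j) (measurable_pi_apply j₀)) measurable_const
    measurable_const

section Stability

variable {m k τ : ℕ} (w : Fin (m + 1) → ℝ)

theorem card_lt_last_le_card_lt_delta0_last_add (hk : 1 ≤ k) (hτ : τ ≤ m) :
    #{j | w j < w (Fin.last m)} ≤
      #{j | delta0 (m + 1) k τ w j < delta0 (m + 1) k τ w ⟨m - τ, by omega⟩} + τ := by
  rw [delta0_apply_last hk hτ, delta0_eq_comp]
  have := card_filter_le_comp_add_of_injective (delta0_id_injective (m + 1) k τ)
    (fun j => w j < w (Fin.last m))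
  rwa [Fintype.card_fin, Fintype.card_fin, show m + 1 - (m + 1 - τ) = τ by omega] at this

theorem card_lt_delta1_last_le_card_lt (hk : 1 ≤ k) (hkm : k ≤ m + 1) (hτ : τ ≤ m) :
    #{j | delta1 (m + 1) k τ w j < delta1 (m + 1) k τ w ⟨m - τ, by omega⟩} ≤
      #{j | w j < w ⟨k - 1, by omega⟩} := by
  rw [delta1_apply_last hk hkm hτ, delta1_eq_comp]
  exact card_filter_comp_le_of_injective (delta1_id_injective hkm τ)
    (fun j => w j < w ⟨k - 1, by omega⟩)

end Stability

section QuantileDeletion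

variable {m k τ : ℕ} {a : ℝ}

theorem coe_last_le_quantile_of_delta0 (w : Fin (m + 1) → ℝ) (hk : 1 ≤ k) (hτ : τ ≤ m)
    (ha₀ : 0 < a) (ha₁ : a ≤ 1)
    (h : #{j | delta0 (m + 1) k τ w j < delta0 (m + 1) k τ w ⟨m - τ, by omega⟩} <
      ⌈a * ((m + 1 : ℕ) : ℝ)⌉.toNat - τ) :
    (w (Fin.last m) : EReal) ≤ Quantile a w := by
  have := card_lt_last_le_card_lt_delta0_last_add w hk hτ
  rw [coe_le_quantile_iff m.add_one_pos ha₀ ha₁]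
  omega

theorem card_delta1_lt_of_coe_le_quantile (w : Fin (m + 1) → ℝ) (hk : 1 ≤ k) (hkm : k ≤ m + 1)
    (hτ : τ ≤ m) (ha₁ : a ≤ 1)
    (h : (w ⟨k - 1, by omega⟩ : EReal) ≤ Quantile (a - τ / ((m + 1 : ℕ) : ℝ)) w) :
    #{j | delta1 (m + 1) k τ w j < delta1 (m + 1) k τ w ⟨m - τ, by omega⟩} <
      ⌈a * ((m + 1 : ℕ) : ℝ)⌉.toNat - τ := by
  rcases le_or_gt (a - τ / ((m + 1 : ℕ) : ℝ)) 0 with hb | hb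
  · rw [quantile_of_nonpos hb, le_bot_iff] at h
    exact absurd h (EReal.coe_ne_bot _)
  have hb₁ : a - τ / ((m + 1 : ℕ) : ℝ) ≤ 1 := by
    have : (0 : ℝ) ≤ τ / ((m + 1 : ℕ) : ℝ) := by positivity
    linarith
  rw [coe_le_quantile_iff m.add_one_pos hb hb₁, ceil_sub_div_mul_toNat m.add_one_pos] at h
  have := card_lt_delta1_last_le_card_lt w hk hkm hτ
  omega

theorem measureReal_coe_le_quantile_sub_div_le_add_switchCoef {Ω : Type*} [MeasurableSpace Ω]
    (P : Measure Ω) [IsFiniteMeasure P] (S : Ω → Fin (m + 1) → ℝ) (hk : 1 ≤ k) (hkm : k ≤ m + 1)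
    (hτ : τ ≤ m) (ha₀ : 0 < a) (ha₁ : a ≤ 1) :
    P.real {ω | (S ω ⟨k - 1, by omega⟩ : EReal) ≤ Quantile (a - τ / ((m + 1 : ℕ) : ℝ)) (S ω)} ≤
      P.real {ω | (S ω (Fin.last m) : EReal) ≤ Quantile a (S ω)} + switchCoef P S k τ := by
  set E : Set (Fin (m + 1 - τ) → ℝ) :=
    {w | #{j | w j < w ⟨m - τ, by omega⟩} < ⌈a * ((m + 1 : ℕ) : ℝ)⌉.toNat - τ}
  have hE : MeasurableSet E := measurable_card_filter_lt_apply _ measurableSet_Iio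
  calc _ ≤ P.real ((fun ω => delta1 _ k τ (S ω)) ⁻¹' E) :=
        measureReal_mono fun ω => card_delta1_lt_of_coe_le_quantile (S ω) hk hkm hτ ha₁
    _ ≤ P.real ((fun ω => delta0 _ k τ (S ω)) ⁻¹' E) + switchCoef P S k τ :=
        measureReal_preimage_le_add_dTV P _ _ hE
    _ ≤ _ := add_le_add_left
        (measureReal_mono fun ω => coe_last_le_quantile_of_delta0 (S ω) hk hτ ha₀ ha₁) _

end QuantileDeletion

/-- One-step coverage comparison (inequality (8) in the proof of Theorem 1). -/
theorem stmt10 {Ω : Type*} [MeasurableSpace Ω] (P : Measure Ω) [IsProbabilityMeasure P]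
    {n L : ℕ} (hL : L ≤ n) (S : Ω → Fin (n - L + 1) → ℝ)
    (τ : ℕ) (hτ : τ ≤ n - L) (α : ℝ) (hα : 0 < α) (hα1 : α < 1)
    (i : ℕ) (hi : L + 1 ≤ i) (hi' : i ≤ n + 1) :
    (P {ω | (S ω (Fin.last (n - L)) : EReal) ≤ Quantile (1 - α) (S ω)}).toReal
      ≥ (P {ω | (S ω ⟨i - L - 1, by omega⟩ : EReal)
            ≤ Quantile (1 - α - (τ : ℝ) / ((n : ℝ) - L + 1)) (S ω)}).toReal
        - switchCoef P S (i - L) τ := by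
  have hm : ((n - L + 1 : ℕ) : ℝ) = n - L + 1 := by push_cast [Nat.cast_sub hL]; ring
  have h := measureReal_coe_le_quantile_sub_div_le_add_switchCoef P S (k := i - L) (by omega)
    (by omega) hτ (a := 1 - α) (by linarith) (by linarith)
  rw [hm] at h
  exact sub_le_iff_le_add.2 h
end
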